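/- Let (δ₁,…,δ_k) be a minimal transitive factorization of σ ∈ S_n into 3-cycles and write δ₁ = (j₃ j₂ j₁). Then it cannot happen that j₁, j₂, j₃ lie in a common cycle of σ in cyclic order j₁, j₂, j₃; that is, there is no minimal transitive factorization of σ into 3-cycles whose first factor is (j₃ j₂ j₁) with j₁, j₂, j₃ in one cycle of σ such that the least a ≥ 1 with σ^a(j₁) = j₂ is smaller than the least b ≥ 1 with σ^b(j₁) = j₃. -/

import Mathlib

open Equiv

/-- The subgroup generated by the entries of `L` acts transitively on `Fin n`. -/
def IsTransitiveFamily {n : ℕ} (L : List (Perm (Fin n))) : Prop :=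
  ∀ x y : Fin n, ∃ g ∈ Subgroup.closure {τ | τ ∈ L}, g x = y

/-- `L` is a transitive factorization of `σ` into 3-cycles. -/
def IsTransFact3 {n : ℕ} (σ : Perm (Fin n)) (L : List (Perm (Fin n))) : Prop :=
  (∀ δ ∈ L, δ.IsThreeCycle) ∧ L.prod = σ ∧ IsTransitiveFamily L

/-- `L` is a minimal transitive factorization of `σ` into 3-cycles. -/
def IsMinTransFact3 {n : ℕ} (σ : Perm (Fin n)) (L : List (Perm (Fin n))) : Prop :=
  IsTransFact3 σ L ∧ ∀ L' : List (Perm (Fin n)), IsTransFact3 σ L' → L.length ≤ L'.length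

/-- `x, y, z` are in cyclic order `x, y, z` in a common cycle of `σ`: the least `a ≥ 1`
with `σ^a x = y` is smaller than the least `b ≥ 1` with `σ^b x = z`. -/
def InCyclicOrder {n : ℕ} (σ : Perm (Fin n)) (x y z : Fin n) : Prop :=
  ∃ a b : ℕ, 0 < a ∧ 0 < b ∧ (σ ^ a) x = y ∧ (σ ^ b) x = z ∧
    (∀ a', 0 < a' → (σ ^ a') x = y → a ≤ a') ∧
    (∀ b', 0 < b' → (σ ^ b') x = z → b ≤ b') ∧ a < b

/-!
Write the cycle of `σ` through `j₁` as `(x₀ … x_{ℓ-1})` with `x_i = σ^i j₁`, `j₂ = x_a`,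
`j₃ = x_b` and `0 < a < b < ℓ`. Then `ω⁻¹ σ` agrees with `σ` off this cycle and on it is the single
cycle `(x₀ … x_{a-1} x_b … x_{ℓ-1} x_a … x_{b-1})`, so `ω⁻¹ σ` is conjugate to `σ`. The factors
after `ω` multiply to `ω⁻¹ σ`, and they already act transitively, since `ω` only moves points
within a cycle of their product. Conjugating them yields a transitive factorization of `σ` into
3-cycles with one factor fewer, contradicting minimality.
-/

open Function Set

namespace Nat

/-- With `x_i = σ^i x` on a cycle of length `ℓ`, this is the position of `x_i` on the cycle
`(x₀ … x_{a-1} x_b … x_{ℓ-1} x_a … x_{b-1})`, the cycle of `(x₀ x_a x_b) * σ` through `x₀`. -/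
def swapBlocks (a b ℓ i : ℕ) : ℕ :=
  if i < a then i else if i < b then ℓ - b + i else a + i - b

def rotateThree (a b j : ℕ) : ℕ :=
  if j = 0 then a else if j = a then b else if j = b then 0 else j

variable {a b ℓ : ℕ}

theorem mapsTo_swapBlocks (hab : a ≤ b) (hb : b ≤ ℓ) :
    MapsTo (swapBlocks a b ℓ) (Iio ℓ) (Iio ℓ) := by
  intro i (hi : i < ℓ)
  show swapBlocks a b ℓ i < ℓ
  unfold swapBlocks
  split_ifs <;> omega

theorem injOn_swapBlocks (hb : b ≤ ℓ) : InjOn (swapBlocks a b ℓ) (Iio ℓ) := by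
  intro i (hi : i < ℓ) j (hj : j < ℓ)
  unfold swapBlocks
  split_ifs <;> omega

theorem rotateThree_lt (ha : a < ℓ) (hb : b < ℓ) {j : ℕ} (hj : j < ℓ) :
    rotateThree a b j < ℓ := by
  unfold rotateThree
  split_ifs <;> omega

theorem swapBlocks_rotateThree_succ_mod (ha : 0 < a) (hab : a < b) (hb : b < ℓ) {i : ℕ}
    (hi : i < ℓ) :
    swapBlocks a b ℓ (rotateThree a b ((i + 1) % ℓ)) = (swapBlocks a b ℓ i + 1) % ℓ := by
  have succ_mod : ∀ k < ℓ, (k + 1) % ℓ = if k + 1 = ℓ then 0 else k + 1 := fun k hk => by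
    split_ifs with h
    · rw [h, Nat.mod_self]
    · exact Nat.mod_eq_of_lt (by omega)
  rw [succ_mod i hi, succ_mod _ (mapsTo_swapBlocks hab.le hb.le hi)]
  unfold swapBlocks rotateThree
  split_ifs <;> first | omega | contradiction

end Nat

namespace Equiv.Perm

variable {α : Type*} {σ : Perm α} {x y : α}

theorem minimalPeriod_pos [Finite α] (σ : Perm α) (x : α) : 0 < minimalPeriod σ x :=
  minimalPeriod_pos_of_mem_periodicPts (σ.injective.mem_periodicPts x)

theorem SameCycle.exists_pow_eq_of_lt_minimalPeriod [Finite α] (h : σ.SameCycle x y) :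
    ∃ i < minimalPeriod σ x, (σ ^ i) x = y := by
  obtain ⟨i, rfl⟩ := h.exists_nat_pow_eq
  exact ⟨i % minimalPeriod σ x, Nat.mod_lt _ (minimalPeriod_pos σ x), iterate_mod_minimalPeriod_eq⟩

theorem apply_pow_apply_eq_pow_mod_minimalPeriod (i : ℕ) :
    σ ((σ ^ i) x) = (σ ^ ((i + 1) % minimalPeriod σ x)) x := by
  rw [← mul_apply, ← pow_succ']
  exact iterate_mod_minimalPeriod_eq.symm

theorem exists_perm_pow_apply_eq_pow_apply {g : ℕ → ℕ}
    (hmaps : MapsTo g (Iio (minimalPeriod σ x)) (Iio (minimalPeriod σ x)))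
    (hinj : InjOn g (Iio (minimalPeriod σ x))) :
    ∃ ρ : Perm α, (∀ i < minimalPeriod σ x, ρ ((σ ^ i) x) = (σ ^ g i) x) ∧
      ∀ y, ¬ σ.SameCycle x y → ρ y = y := by
  let ι : Fin (minimalPeriod σ x) ↪ α :=
    ⟨fun i => (σ ^ (i : ℕ)) x, fun i j h => Fin.ext (iterate_injOn_Iio_minimalPeriod i.2 j.2 h)⟩
  let e : Perm (Fin (minimalPeriod σ x)) := Equiv.ofBijective (fun i => ⟨g i, hmaps i.2⟩)
    (Finite.injective_iff_bijective.mp fun i j h => Fin.ext (hinj i.2 j.2 (congrArg Fin.val h)))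
  refine ⟨e.viaEmbedding ι, fun i hi => viaEmbedding_apply e ι ⟨i, hi⟩,
    fun y hy => viaEmbedding_apply_of_notMem e ι y ?_⟩
  rintro ⟨i, rfl⟩
  exact hy (sameCycle_pow_right.mpr (SameCycle.refl σ x))

theorem pow_apply_ne_pow_apply_of_lt_minimalPeriod {i j : ℕ} (hi : i < minimalPeriod σ x)
    (hj : j < minimalPeriod σ x) (hij : i ≠ j) : (σ ^ i) x ≠ (σ ^ j) x :=
  fun h => hij (iterate_injOn_Iio_minimalPeriod hi hj h)

section ThreeCycle

variable [DecidableEq α] {a b : ℕ}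

theorem swap_mul_swap_apply_pow_apply (ha : 0 < a) (hab : a < b) (hb : b < minimalPeriod σ x)
    {j : ℕ} (hj : j < minimalPeriod σ x) :
    (swap x ((σ ^ a) x) * swap ((σ ^ a) x) ((σ ^ b) x)) ((σ ^ j) x) =
      (σ ^ Nat.rotateThree a b j) x := by
  have hne {i k : ℕ} (hi : i < minimalPeriod σ x) (hk : k < minimalPeriod σ x) (hik : i ≠ k) :=
    pow_apply_ne_pow_apply_of_lt_minimalPeriod hi hk hik
  have h0 : 0 < minimalPeriod σ x := ha.trans (hab.trans hb)
  have ha' : a < minimalPeriod σ x := hab.trans hb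
  have hxa : x ≠ (σ ^ a) x := hne h0 ha' ha.ne
  have hxb : x ≠ (σ ^ b) x := hne h0 hb (ha.trans hab).ne
  have hab' : (σ ^ a) x ≠ (σ ^ b) x := hne ha' hb hab.ne
  unfold Nat.rotateThree
  split_ifs with hj0 hja hjb
  · subst hj0
    rw [mul_apply, pow_zero, one_apply, swap_apply_of_ne_of_ne hxa hxb, swap_apply_left]
  · subst hja
    rw [mul_apply, swap_apply_left, swap_apply_of_ne_of_ne hxb.symm hab'.symm]
  · subst hjb
    rw [mul_apply, swap_apply_right, swap_apply_right, pow_zero, one_apply]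
  · rw [mul_apply, swap_apply_of_ne_of_ne (hne hj ha' hja) (hne hj hb hjb),
      swap_apply_of_ne_of_ne (show (σ ^ j) x ≠ x from hne hj h0 hj0) (hne hj ha' hja)]

theorem swap_mul_swap_apply_of_not_sameCycle (h : ¬ σ.SameCycle x y) :
    (swap x ((σ ^ a) x) * swap ((σ ^ a) x) ((σ ^ b) x)) y = y := by
  have hne (i : ℕ) : y ≠ (σ ^ i) x := fun hi =>
    h (hi ▸ sameCycle_pow_right.mpr (SameCycle.refl σ x))
  rw [mul_apply, swap_apply_of_ne_of_ne (hne a) (hne b),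
    swap_apply_of_ne_of_ne (show y ≠ x from hne 0) (hne a)]

end ThreeCycle

section Rearrangement

variable [Finite α] {τ : Perm α} {a b : ℕ}

theorem exists_conj_mul (ha : 0 < a) (hab : a < b) (hb : b < minimalPeriod σ x)
    (hτ : ∀ j < minimalPeriod σ x, τ ((σ ^ j) x) = (σ ^ Nat.rotateThree a b j) x)
    (hτ_fix : ∀ y, ¬ σ.SameCycle x y → τ y = y) :
    ∃ ρ : Perm α, ρ * (τ * σ) = σ * ρ ∧ ∀ y, σ.SameCycle x y → σ.SameCycle x (ρ y) := by
  obtain ⟨ρ, hρ, hρ_fix⟩ := exists_perm_pow_apply_eq_pow_apply (σ := σ) (x := x)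
    (Nat.mapsTo_swapBlocks hab.le hb.le) (Nat.injOn_swapBlocks hb.le)
  refine ⟨ρ, ext fun y => ?_, fun y hy => ?_⟩
  · change ρ (τ (σ y)) = σ (ρ y)
    by_cases hy : σ.SameCycle x y
    · obtain ⟨i, hi, rfl⟩ := hy.exists_pow_eq_of_lt_minimalPeriod
      have hi' : (i + 1) % minimalPeriod σ x < minimalPeriod σ x :=
        Nat.mod_lt _ (i.zero_le.trans_lt hi)
      rw [apply_pow_apply_eq_pow_mod_minimalPeriod, hτ _ hi',
        hρ _ (Nat.rotateThree_lt (hab.trans hb) hb hi'), hρ i hi,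
        apply_pow_apply_eq_pow_mod_minimalPeriod, Nat.swapBlocks_rotateThree_succ_mod ha hab hb hi]
    · have hσy : ¬ σ.SameCycle x (σ y) := sameCycle_apply_right.not.mpr hy
      rw [hτ_fix _ hσy, hρ_fix _ hσy, hρ_fix y hy]
  · obtain ⟨i, hi, rfl⟩ := hy.exists_pow_eq_of_lt_minimalPeriod
    rw [hρ i hi]
    exact sameCycle_pow_right.mpr (SameCycle.refl σ x)

theorem isConj_mul_and_sameCycle (ha : 0 < a) (hab : a < b) (hb : b < minimalPeriod σ x)
    (hτ : ∀ j < minimalPeriod σ x, τ ((σ ^ j) x) = (σ ^ Nat.rotateThree a b j) x)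
    (hτ_fix : ∀ y, ¬ σ.SameCycle x y → τ y = y) :
    IsConj σ (τ * σ) ∧ ∀ y, (τ * σ).SameCycle y (τ y) := by
  obtain ⟨ρ, hconj, hρ⟩ := exists_conj_mul ha hab hb hτ hτ_fix
  have hτσ : τ * σ = ρ⁻¹ * σ * ρ⁻¹⁻¹ := by rw [inv_inv, mul_assoc, ← hconj, inv_mul_cancel_left]
  refine ⟨isConj_iff.mpr ⟨ρ⁻¹, hτσ.symm⟩, fun y => ?_⟩
  by_cases hy : σ.SameCycle x y
  · obtain ⟨j, hj, rfl⟩ := hy.exists_pow_eq_of_lt_minimalPeriod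
    rw [hτσ, sameCycle_conj, inv_inv, hτ j hj]
    exact (hρ _ hy).symm.trans (hρ _ (sameCycle_pow_right.mpr (SameCycle.refl σ x)))
  · rw [hτ_fix y hy]

end Rearrangement

end Equiv.Perm

section Factorizations

variable {n : ℕ} {σ : Perm (Fin n)} {L : List (Perm (Fin n))}

theorem IsTransitiveFamily.of_cons {ω : Perm (Fin n)} (h : IsTransitiveFamily (ω :: L))
    (hω : ∀ y, ∃ g ∈ Subgroup.closure {τ | τ ∈ L}, g y = ω y) : IsTransitiveFamily L := by
  set H := Subgroup.closure {τ | τ ∈ L}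
  have reach : ∀ g ∈ Subgroup.closure {τ | τ ∈ ω :: L}, ∀ y, ∃ h ∈ H, h y = g y := by
    intro g hg
    induction hg using Subgroup.closure_induction with
    | mem τ hτ =>
      rcases List.mem_cons.mp hτ with rfl | hτ
      · exact hω
      · exact fun y => ⟨τ, Subgroup.subset_closure hτ, rfl⟩
    | one => exact fun y => ⟨1, H.one_mem, rfl⟩
    | mul g₁ g₂ _ _ ih₁ ih₂ =>
      intro y
      obtain ⟨h₂, hh₂, e₂⟩ := ih₂ y
      obtain ⟨h₁, hh₁, e₁⟩ := ih₁ (g₂ y)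
      exact ⟨h₁ * h₂, H.mul_mem hh₁ hh₂, by rw [Perm.mul_apply, Perm.mul_apply, e₂, e₁]⟩
    | inv g _ ih =>
      intro y
      obtain ⟨h, hh, e⟩ := ih (g⁻¹ y)
      exact ⟨h⁻¹, H.inv_mem hh, Perm.inv_eq_iff_eq.mpr (by rw [e]; simp)⟩
  intro x y
  obtain ⟨g, hg, rfl⟩ := h x y
  exact reach g hg x

theorem IsTransitiveFamily.map_conj (h : IsTransitiveFamily L) (ρ : Perm (Fin n)) :
    IsTransitiveFamily (L.map (MulAut.conj ρ)) := by
  intro x y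
  obtain ⟨g, hg, hgy⟩ := h (ρ⁻¹ x) (ρ⁻¹ y)
  refine ⟨MulAut.conj ρ g, ?_, ?_⟩
  swap
  · rw [MulAut.conj_apply, Perm.mul_apply, Perm.mul_apply, hgy]
    simp
  have : MulAut.conj ρ g ∈ (Subgroup.closure {τ | τ ∈ L}).map (MulAut.conj ρ).toMonoidHom :=
    ⟨g, hg, rfl⟩
  rw [MonoidHom.map_closure] at this
  convert this using 2
  ext τ
  simp

theorem IsTransFact3.map_conj (h : IsTransFact3 σ L) (ρ : Perm (Fin n)) :
    IsTransFact3 (ρ * σ * ρ⁻¹) (L.map (MulAut.conj ρ)) := by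
  obtain ⟨h3, hprod, htrans⟩ := h
  refine ⟨?_, ?_, htrans.map_conj ρ⟩
  · simp only [List.mem_map, forall_exists_index, and_imp]
    rintro _ δ hδ rfl
    exact Perm.cycleType_conj.trans (h3 δ hδ)
  · rw [← map_list_prod, hprod, MulAut.conj_apply]

theorem IsMinTransFact3.not_isConj_mul {τ : Perm (Fin n)} (h : IsMinTransFact3 σ (τ⁻¹ :: L))
    (hτ : ∀ y, (τ * σ).SameCycle y (τ y)) : ¬ IsConj σ (τ * σ) := by
  intro hconj
  obtain ⟨⟨h3, hprod, htrans⟩, hmin⟩ := h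
  have hL : L.prod = τ * σ := inv_mul_eq_iff_eq_mul.mp (by rwa [List.prod_cons] at hprod)
  have hLtrans : IsTransitiveFamily L := htrans.of_cons fun y => by
    obtain ⟨i, hi⟩ := (hτ (τ⁻¹ y)).symm
    simp only [Perm.coe_inv, apply_symm_apply] at hi
    exact ⟨L.prod ^ i, zpow_mem (list_prod_mem fun g hg => Subgroup.subset_closure hg) i,
      hL ▸ hi⟩
  have hfact : IsTransFact3 (τ * σ) L :=
    ⟨fun δ hδ => h3 δ (List.mem_cons_of_mem _ hδ), hL, hLtrans⟩
  obtain ⟨ρ, hρ⟩ := isConj_iff.mp hconj.symm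
  have hshorter := hmin _ (hρ ▸ hfact.map_conj ρ)
  simp only [List.length_cons, List.length_map] at hshorter
  omega

end Factorizations

theorem InCyclicOrder.exists_lt_minimalPeriod {n : ℕ} {σ : Perm (Fin n)} {x y z : Fin n}
    (h : InCyclicOrder σ x y z) (hxz : x ≠ z) :
    ∃ a b, 0 < a ∧ a < b ∧ b < minimalPeriod σ x ∧ (σ ^ a) x = y ∧ (σ ^ b) x = z := by
  obtain ⟨a, b, ha, -, rfl, rfl, -, hb_min, hab⟩ := h
  refine ⟨a, b, ha, hab, ?_, rfl, rfl⟩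
  have hmod : (σ ^ (b % minimalPeriod σ x)) x = (σ ^ b) x := iterate_mod_minimalPeriod_eq
  have hpos : 0 < b % minimalPeriod σ x :=
    Nat.pos_of_ne_zero fun h0 => hxz (by rw [← hmod, h0, pow_zero, Perm.one_apply])
  exact (hb_min _ hpos hmod).trans_lt (Nat.mod_lt _ (Perm.minimalPeriod_pos σ x))

theorem min_threeCycle_factorization_no_fourth_case_general
    (n : ℕ) (σ ω : Perm (Fin n)) (L : List (Perm (Fin n))) (j₁ j₂ j₃ : Fin n)
    (h13 : j₁ ≠ j₃)
    (hω : ω = Equiv.swap j₃ j₂ * Equiv.swap j₂ j₁)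
    (hmin : IsMinTransFact3 σ (ω :: L))
    (horder : InCyclicOrder σ j₁ j₂ j₃) :
    False := by
  obtain ⟨a, b, ha, hab, hb, rfl, rfl⟩ := horder.exists_lt_minimalPeriod h13
  rw [← inv_inv ω, hω, mul_inv_rev, swap_inv, swap_inv, swap_comm _ j₁, swap_comm ((σ ^ b) j₁)]
    at hmin
  obtain ⟨hconj, hcycle⟩ := Perm.isConj_mul_and_sameCycle ha hab hb
    (fun _ hj => Perm.swap_mul_swap_apply_pow_apply ha hab hb hj)
    (fun _ hy => Perm.swap_mul_swap_apply_of_not_sameCycle hy)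
  exact hmin.not_isConj_mul hcycle hconj

/-- Case (4) of Lemma 5.2 cannot happen: there is no minimal transitive factorization of
`σ` into 3-cycles whose first factor is `(j₃ j₂ j₁)` (sending `j₃ ↦ j₂ ↦ j₁ ↦ j₃`)
with `j₁, j₂, j₃` in one common cycle of `σ` in cyclic order `j₁, j₂, j₃`. -/
theorem min_threeCycle_factorization_no_fourth_case
    (n : ℕ) (σ ω : Perm (Fin n)) (L : List (Perm (Fin n))) (j₁ j₂ j₃ : Fin n)
    (h12 : j₁ ≠ j₂) (h13 : j₁ ≠ j₃) (h23 : j₂ ≠ j₃)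
    (hω : ω = Equiv.swap j₃ j₂ * Equiv.swap j₂ j₁)
    (hmin : IsMinTransFact3 σ (ω :: L))
    (horder : InCyclicOrder σ j₁ j₂ j₃) :
    False :=
  min_threeCycle_factorization_no_fourth_case_general n σ ω L j₁ j₂ j₃ h13 hω hmin horder
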